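/- If a feasible linear SDP min tr(Q W) subject to tr(Aᵢ W) = bᵢ (i = 1,…,m), W ⪰ 0 attains its optimum, then it has an optimal solution W* with rank(W*)·(rank(W*)+1)/2 ≤ m; in particular there is an optimal solution of rank at most ⌊(√(8m+1) − 1)/2⌋ = O(√m). -/

import Mathlib

/-!
Take an optimal solution `W` of minimal rank `r` and factor it as `W = C Cᵀ` with `C` of size
`n × r`. If `r (r + 1) / 2 > m`, a dimension count gives a nonzero symmetric `r × r` matrix `S`
with `tr (Aᵢ C S Cᵀ) = 0` for all `i`. Rescale `S` so that `1 ± S ⪰ 0` and `1 + S` is singular: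
then `C (1 ± S) Cᵀ` are both feasible, so the linear objective, minimal at `W` (the midpoint), is
constant on this segment, and `C (1 + S) Cᵀ` is an optimal solution of rank `< r`.
-/

open Matrix

namespace Matrix

section Spectral

variable {n : Type*} [Fintype n] [DecidableEq n]

theorem PosSemidef.exists_eq_mul_transpose {W : Matrix n n ℝ} (hW : W.PosSemidef) :
    ∃ C : Matrix n (Fin W.rank) ℝ, W = C * Cᵀ := by
  set μ := hW.1.eigenvalues
  set U : Matrix n n ℝ := (hW.1.eigenvectorUnitary : Matrix n n ℝ)
  let B : Matrix n n ℝ := U * diagonal fun j => √(μ j)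
  have hB : W = B * Bᵀ := by
    have hsq : diagonal μ = (diagonal fun j => √(μ j)) * diagonal fun j => √(μ j) := by
      rw [diagonal_mul_diagonal]
      congr with j
      exact (Real.mul_self_sqrt (hW.eigenvalues_nonneg j)).symm
    calc W = U * diagonal μ * Uᵀ := by
          conv_lhs => rw [hW.1.spectral_theorem, Unitary.conjStarAlgAut_apply]
          simp [U, μ, star_eq_conjTranspose]
      _ = B * Bᵀ := by simp only [hsq, B, transpose_mul, diagonal_transpose, mul_assoc]
  have hB0 : ∀ i j, B i j ≠ 0 → μ j ≠ 0 := fun i j h hμ => h (by simp [B, hμ])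
  let e : Fin W.rank ≃ {j // μ j ≠ 0} :=
    (Fintype.equivFinOfCardEq hW.1.rank_eq_card_non_zero_eigs.symm).symm
  refine ⟨B.submatrix id (Subtype.val ∘ e), hB.trans ?_⟩
  ext i k
  simp only [mul_apply, transpose_apply, submatrix_apply, id, Function.comp_apply]
  rw [e.sum_comp (fun j => B i j * B k j),
    ← Finset.sum_subtype _ (fun _ => Finset.mem_filter_univ _) (fun j => B i j * B k j),
    Finset.sum_filter_of_ne fun j _ h => hB0 i j (left_ne_zero_of_mul h)]

theorem IsHermitian.one_add_smul_eq {S : Matrix n n ℝ} (hS : S.IsHermitian) (t : ℝ) :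
    1 + t • S = Unitary.conjStarAlgAut ℝ _ hS.eigenvectorUnitary
      (diagonal fun j => 1 + t * hS.eigenvalues j) := by
  conv_lhs => rw [hS.spectral_theorem]
  rw [← map_one (Unitary.conjStarAlgAut ℝ _ hS.eigenvectorUnitary), ← map_smul, ← map_add,
    ← diagonal_one, ← diagonal_smul, diagonal_add]
  rfl

theorem IsHermitian.posSemidef_one_add_smul {S : Matrix n n ℝ} (hS : S.IsHermitian) {t : ℝ}
    (ht : ∀ j, 0 ≤ 1 + t * hS.eigenvalues j) : (1 + t • S).PosSemidef := by
  rw [hS.one_add_smul_eq]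
  simpa [Unitary.isUnit_coe.posSemidef_star_right_conjugate_iff, posSemidef_diagonal_iff]

theorem IsHermitian.rank_one_add_smul {S : Matrix n n ℝ} (hS : S.IsHermitian) (t : ℝ) :
    (1 + t • S).rank = Fintype.card {j // 1 + t * hS.eigenvalues j ≠ 0} := by
  rw [hS.one_add_smul_eq, Unitary.conjStarAlgAut_apply, ← Unitary.coe_star]
  simp [-isUnit_iff_ne_zero, -Unitary.coe_star, rank_diagonal]

theorem IsHermitian.exists_posSemidef_one_add_smul_rank_lt {S : Matrix n n ℝ}
    (hS : S.IsHermitian) (hS0 : S ≠ 0) :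
    ∃ t : ℝ, (1 + t • S).PosSemidef ∧ (1 + (-t) • S).PosSemidef ∧
      (1 + t • S).rank < Fintype.card n := by
  set μ := hS.eigenvalues
  have hμ : μ ≠ 0 := fun h => hS0 (hS.eigenvalues_eq_zero_iff.mp h)
  obtain ⟨j, hj⟩ := Function.ne_iff.mp hμ
  obtain ⟨k, -, hk⟩ := Finset.exists_max_image Finset.univ (fun i => |μ i|) ⟨j, Finset.mem_univ j⟩
  have hk0 : μ k ≠ 0 := abs_pos.mp ((abs_pos.mpr hj).trans_le (hk j (Finset.mem_univ j)))
  -- `t = -1/μ k` with `|μ k|` maximal kills the `k`-th eigenvalue of `1 + t • S` and keeps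
  -- all eigenvalues of `1 ± t • S` nonnegative.
  have hnonneg : ∀ s : ℝ, |s| = |(μ k)⁻¹| → ∀ i, 0 ≤ 1 + s * μ i := fun s hs i => by
    have : |s * μ i| ≤ 1 := by
      rw [abs_mul, hs, abs_inv]
      exact inv_mul_le_one_of_le₀ (hk i (Finset.mem_univ i)) (abs_nonneg _)
    linarith [neg_abs_le (s * μ i)]
  refine ⟨-(μ k)⁻¹, hS.posSemidef_one_add_smul (hnonneg _ (abs_neg _)),
    hS.posSemidef_one_add_smul (hnonneg _ (by rw [neg_neg])), ?_⟩
  rw [hS.rank_one_add_smul]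
  exact Fintype.card_subtype_lt (x := k) (by simp [μ, hk0])

end Spectral

section Sym2

variable {r : Type*}

def ofSym2 (R : Type*) [CommSemiring R] : (Sym2 r → R) →ₗ[R] Matrix r r R where
  toFun x := of fun i j => x s(i, j)
  map_add' _ _ := rfl
  map_smul' _ _ := rfl

@[simp]
theorem ofSym2_apply (R : Type*) [CommSemiring R] (x : Sym2 r → R) (i j : r) :
    ofSym2 R x i j = x s(i, j) :=
  rfl

theorem isHermitian_ofSym2 (x : Sym2 r → ℝ) : (ofSym2 ℝ x).IsHermitian := by
  ext i j
  simp [Sym2.eq_swap]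

theorem ofSym2_injective (R : Type*) [CommSemiring R] :
    Function.Injective (ofSym2 (r := r) R) := by
  intro x y h
  funext z
  induction z using Sym2.ind with
  | _ i j => exact congrFun (congrFun h i) j

theorem exists_isHermitian_ne_zero_map_eq_zero [Fintype r] {V : Type*} [AddCommGroup V]
    [Module ℝ V] [FiniteDimensional ℝ V] (Φ : Matrix r r ℝ →ₗ[ℝ] V)
    (hV : Module.finrank ℝ V < Fintype.card r * (Fintype.card r + 1) / 2) :
    ∃ S : Matrix r r ℝ, S.IsHermitian ∧ S ≠ 0 ∧ Φ S = 0 := by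
  have hdim : Module.finrank ℝ V < Module.finrank ℝ (Sym2 r → ℝ) := by
    rwa [Module.finrank_fintype_fun_eq_card, Sym2.card, Nat.choose_two_right, Nat.add_sub_cancel,
      mul_comm]
  obtain ⟨x, hx, hx0⟩ := Submodule.exists_mem_ne_zero_of_ne_bot
    ((Φ ∘ₗ ofSym2 ℝ).ker_ne_bot_of_finrank_lt hdim)
  exact ⟨ofSym2 ℝ x, isHermitian_ofSym2 x,
    (map_ne_zero_iff _ (ofSym2_injective ℝ)).mpr hx0, hx⟩

end Sym2

end Matrix

section SDP

variable {n ι : Type*} [Fintype n] [DecidableEq n]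

def IsSDPFeasible (A : ι → Matrix n n ℝ) (b : ι → ℝ) (W : Matrix n n ℝ) : Prop :=
  W.PosSemidef ∧ ∀ i, (A i * W).trace = b i

def IsSDPOptimal (Q : Matrix n n ℝ) (A : ι → Matrix n n ℝ) (b : ι → ℝ) (W : Matrix n n ℝ) :
    Prop :=
  IsSDPFeasible A b W ∧ ∀ W', IsSDPFeasible A b W' → (Q * W).trace ≤ (Q * W').trace

variable {Q : Matrix n n ℝ} {A : ι → Matrix n n ℝ} {b : ι → ℝ} {W Δ : Matrix n n ℝ}

theorem IsSDPFeasible.add_smul (hW : IsSDPFeasible A b W) (hΔ : ∀ i, (A i * Δ).trace = 0)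
    {s : ℝ} (hs : (W + s • Δ).PosSemidef) : IsSDPFeasible A b (W + s • Δ) :=
  ⟨hs, fun i => by simp [mul_add, hW.2 i, hΔ i]⟩

/-- A linear objective that is minimal at the midpoint of a feasible segment is constant on it. -/
theorem IsSDPOptimal.add_smul (hW : IsSDPOptimal Q A b W) {s : ℝ}
    (hpos : IsSDPFeasible A b (W + s • Δ)) (hneg : IsSDPFeasible A b (W + (-s) • Δ)) :
    IsSDPOptimal Q A b (W + s • Δ) := by
  have hobj : ∀ u : ℝ, (Q * (W + u • Δ)).trace = (Q * W).trace + u * (Q * Δ).trace :=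
    fun u => by simp [mul_add]
  have hpos' := hW.2 _ hpos
  have hneg' := hW.2 _ hneg
  rw [hobj] at hpos' hneg'
  refine ⟨hpos, fun W' hW' => ?_⟩
  rw [hobj]
  linarith [hW.2 W' hW']

theorem IsSDPOptimal.exists_rank_lt [Fintype ι] (hW : IsSDPOptimal Q A b W)
    (hm : Fintype.card ι < W.rank * (W.rank + 1) / 2) :
    ∃ W', IsSDPOptimal Q A b W' ∧ W'.rank < W.rank := by
  obtain ⟨C, hC⟩ := hW.1.1.exists_eq_mul_transpose
  let Φ : Matrix (Fin W.rank) (Fin W.rank) ℝ →ₗ[ℝ] (ι → ℝ) :=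
    { toFun := fun M i => (A i * (C * M * Cᵀ)).trace
      map_add' := fun M N => by ext i; simp [Matrix.mul_add, Matrix.add_mul]
      map_smul' := fun c M => by ext i; simp }
  obtain ⟨S, hS, hS0, hΦS⟩ := exists_isHermitian_ne_zero_map_eq_zero Φ
    (by rwa [Module.finrank_fintype_fun_eq_card, Fintype.card_fin])
  obtain ⟨t, hpos, hneg, hrank⟩ := hS.exists_posSemidef_one_add_smul_rank_lt hS0
  have hcongr : ∀ s : ℝ, C * (1 + s • S) * Cᵀ = W + s • (C * S * Cᵀ) := fun s => by
    rw [Matrix.mul_add, Matrix.add_mul, Matrix.mul_one, ← hC, Matrix.mul_smul, Matrix.smul_mul]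
  have hfeas : ∀ s : ℝ, (1 + s • S).PosSemidef → IsSDPFeasible A b (W + s • (C * S * Cᵀ)) :=
    fun s hs => hW.1.add_smul (congrFun hΦS) <| by
      simpa [hcongr, conjTranspose_eq_transpose_of_trivial] using hs.mul_mul_conjTranspose_same C
  refine ⟨_, hW.add_smul (hfeas t hpos) (hfeas (-t) hneg), ?_⟩
  calc (W + t • (C * S * Cᵀ)).rank = (C * (1 + t • S) * Cᵀ).rank := by rw [hcongr]
    _ ≤ (C * (1 + t • S)).rank := rank_mul_le_left _ _
    _ ≤ (1 + t • S).rank := rank_mul_le_right _ _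
    _ < W.rank := by rwa [Fintype.card_fin] at hrank

theorem exists_isSDPOptimal_rank_mul_succ_div_two_le [Fintype ι]
    (h : ∃ W, IsSDPOptimal Q A b W) :
    ∃ W, IsSDPOptimal Q A b W ∧ W.rank * (W.rank + 1) / 2 ≤ Fintype.card ι := by
  obtain ⟨W, hW, hmin⟩ := (measure Matrix.rank).wf.has_min {W | IsSDPOptimal Q A b W} h
  refine ⟨W, hW, not_lt.mp fun hm => ?_⟩
  obtain ⟨W', hW', hlt⟩ := hW.exists_rank_lt hm
  exact hmin W' hW' hlt

end SDP

/-- `(√(8m + 1) - 1) / 2` is the positive root of `x (x + 1) / 2 = m`. -/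
theorem le_floor_triangular_root {r m : ℕ} (h : r * (r + 1) / 2 ≤ m) :
    r ≤ ⌊(√(8 * m + 1) - 1) / 2⌋₊ := by
  have h2m : r * (r + 1) ≤ 2 * m := by
    obtain ⟨q, hq⟩ := Nat.even_mul_succ_self r
    omega
  have hr : (r : ℝ) * (r + 1) ≤ 2 * m := by exact_mod_cast h2m
  apply Nat.le_floor
  rw [le_div_iff₀ two_pos, le_sub_iff_add_le, Real.le_sqrt (by positivity) (by positivity)]
  nlinarith

theorem stmt_16 (n m : ℕ) (Q : Matrix (Fin n) (Fin n) ℝ) (A : Fin m → Matrix (Fin n) (Fin n) ℝ)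
    (b : Fin m → ℝ)
    (hattain : ∃ W0 : Matrix (Fin n) (Fin n) ℝ, W0.PosSemidef ∧ (∀ i, ((A i) * W0).trace = b i) ∧
      ∀ W : Matrix (Fin n) (Fin n) ℝ, W.PosSemidef → (∀ i, ((A i) * W).trace = b i) →
        (Q * W0).trace ≤ (Q * W).trace) :
    ∃ Wstar : Matrix (Fin n) (Fin n) ℝ, Wstar.PosSemidef ∧
      (∀ i, ((A i) * Wstar).trace = b i) ∧
      (∀ W : Matrix (Fin n) (Fin n) ℝ, W.PosSemidef → (∀ i, ((A i) * W).trace = b i) →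
        (Q * Wstar).trace ≤ (Q * W).trace) ∧
      Wstar.rank * (Wstar.rank + 1) / 2 ≤ m ∧
      Wstar.rank ≤ ⌊(Real.sqrt (8 * m + 1) - 1) / 2⌋₊ := by
  obtain ⟨W0, hpsd, hfeas, hopt⟩ := hattain
  obtain ⟨W, ⟨⟨hWpsd, hWfeas⟩, hWopt⟩, hrank⟩ :=
    exists_isSDPOptimal_rank_mul_succ_div_two_le (Q := Q) (A := A) (b := b)
      ⟨W0, ⟨hpsd, hfeas⟩, fun W hW => hopt W hW.1 hW.2⟩
  rw [Fintype.card_fin] at hrank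
  exact ⟨W, hWpsd, hWfeas, fun W' h₁ h₂ => hWopt W' ⟨h₁, h₂⟩, hrank,
    le_floor_triangular_root hrank⟩
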